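/- Let x = σ_0^{a_0}⋯σ_{p−1}^{a_{p−1}} τ^a ∈ S − K (a ≢ 0 mod p), viewed as a permutation of {1,…,p²}. Then x is a product of p disjoint p-cycles if and only if a_0 + ⋯ + a_{p−1} ≡ 0 (mod p); otherwise x is a p²-cycle. -/

import Mathlib

/-- The element `σ₀^{a 0} ⋯ σ_{p-1}^{a (p-1)} · τ^b` of the Sylow `p`-subgroup
`S = Z/p ≀ Z/p ≤ Σ_{p²}`, acting on `{1,…,p²}` identified with `ZMod p × ZMod p`
via `lp + (k+1) ↦ (l, k)`.  It sends `(l,k)` to `(l + b, k + a (l + b))`. -/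
def elt (p : ℕ) (a : ZMod p → ZMod p) (b : ZMod p) : Equiv.Perm (ZMod p × ZMod p) where
  toFun x := (x.1 + b, x.2 + a (x.1 + b))
  invFun x := (x.1 - b, x.2 - a x.1)
  left_inv x := by simp
  right_inv x := by simp

/-! Writing `x = elt p a b`, the power `x ^ n` shifts the first coordinate by `n • b` and adds to
the second one the values of `a` along the progression `l - j • b`, `j < n`. For `n = p` and
`b ≠ 0` this progression runs once through `ZMod p`, so `x ^ p` is the translation by
`λ = ∑ i, a i` in the second coordinate. Hence `x ^ p = 1` iff `λ = 0`, and otherwise `x` has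
order `p²`. As `x` has no fixed points its cycle lengths sum to `p²`: they all equal `p` in the
first case, and in the second one of them is the order `p²`. -/

namespace Equiv.Perm

variable {α : Type*} [Fintype α] [DecidableEq α] {σ : Perm α}

theorem cycleType_eq_replicate_of_pow_prime_eq_one {p : ℕ} [Fact p.Prime] (hσ : σ ^ p = 1) :
    σ.cycleType = Multiset.replicate (σ.support.card / p) p := by
  have hrep := cycleType_of_pow_prime_eq_one hσ
  have hsum : Multiset.card σ.cycleType * p = σ.support.card := by
    rw [← sum_cycleType, hrep, Multiset.sum_replicate, Multiset.card_replicate, smul_eq_mul]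
  rw [← hsum, Nat.mul_div_cancel _ (Fact.out : p.Prime).pos, ← hrep]

theorem prime_pow_mem_cycleType {p k : ℕ} (hp : p.Prime) (hσ : orderOf σ = p ^ (k + 1)) :
    p ^ (k + 1) ∈ σ.cycleType := by
  by_contra hmem
  have hdvd : orderOf σ ∣ p ^ k := by
    rw [← lcm_cycleType, Multiset.lcm_dvd]
    intro n hn
    obtain ⟨i, hi, rfl⟩ := (Nat.dvd_prime_pow hp).1 (hσ ▸ dvd_of_mem_cycleType hn)
    have hik : i ≠ k + 1 := by rintro rfl; exact hmem hn
    exact Nat.pow_dvd_pow p (by omega)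
  rw [hσ, Nat.pow_dvd_pow_iff_le_right hp.one_lt] at hdvd
  omega

theorem cycleType_eq_singleton_of_mem {n : ℕ} (hn : n ∈ σ.cycleType) (hle : σ.support.card ≤ n) :
    σ.cycleType = {n} := by
  obtain ⟨rest, hrest⟩ := Multiset.exists_cons_of_mem hn
  have hsum : rest.sum = 0 := by
    have := sum_cycleType σ
    rw [hrest, Multiset.sum_cons] at this
    omega
  suffices rest = 0 by rw [hrest, this]; rfl
  refine Multiset.eq_zero_of_forall_notMem fun m hm => ?_
  have h2 : 2 ≤ m := two_le_of_mem_cycleType (hrest ▸ Multiset.mem_cons_of_mem hm)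
  have h0 : m = 0 := Multiset.sum_eq_zero_iff.1 hsum m hm
  omega

end Equiv.Perm

theorem ZMod.sum_range_natCast {M : Type*} [AddCommMonoid M] (p : ℕ) [NeZero p]
    (f : ZMod p → M) : ∑ j ∈ Finset.range p, f j = ∑ i : ZMod p, f i :=
  Finset.sum_nbij' (fun j => (j : ZMod p)) ZMod.val (by simp) (fun i _ => by simp [ZMod.val_lt])
    (fun j hj => ZMod.val_cast_of_lt (Finset.mem_range.1 hj)) (fun i _ => ZMod.natCast_zmod_val i)
    (fun _ _ => rfl)

section

variable {p : ℕ} (a : ZMod p → ZMod p) (b : ZMod p)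

@[simp]
theorem elt_apply (x : ZMod p × ZMod p) : elt p a b x = (x.1 + b, x.2 + a (x.1 + b)) := rfl

theorem elt_eq_one_iff : elt p a b = 1 ↔ b = 0 ∧ a = 0 := by
  constructor
  · intro h
    have hb : b = 0 := by simpa using congrArg Prod.fst (Equiv.ext_iff.1 h (0, 0))
    subst hb
    exact ⟨rfl, funext fun l => by simpa using congrArg Prod.snd (Equiv.ext_iff.1 h (l, 0))⟩
  · rintro ⟨rfl, rfl⟩
    ext x <;> simp

theorem elt_pow (n : ℕ) :
    elt p a b ^ n = elt p (fun l => ∑ j ∈ Finset.range n, a (l - j • b)) (n • b) := by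
  induction n with
  | zero => ext x <;> simp
  | succ n ih =>
    rw [pow_succ, ih]
    ext x
    · simp only [elt_apply, Equiv.Perm.mul_apply, succ_nsmul]; ring
    · simp only [elt_apply, Equiv.Perm.mul_apply, Finset.sum_range_succ, succ_nsmul]
      have hshift : ∀ j : ℕ, x.1 + (n • b + b) - j • b = x.1 + b + n • b - j • b :=
        fun j => by ring
      simp only [hshift, add_sub_cancel_right]
      ring

theorem elt_apply_ne_self (hb : b ≠ 0) (x : ZMod p × ZMod p) : elt p a b x ≠ x := fun h =>
  hb (add_eq_left.1 (congrArg Prod.fst h))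

end

section

variable {p : ℕ} [Fact p.Prime] (a : ZMod p → ZMod p) {b : ZMod p}

theorem elt_pow_prime (hb : b ≠ 0) : elt p a b ^ p = elt p (fun _ => ∑ i, a i) 0 := by
  rw [elt_pow, nsmul_eq_mul, ZMod.natCast_self, zero_mul]
  congr 1
  funext l
  simp only [nsmul_eq_mul]
  rw [ZMod.sum_range_natCast p (fun i => a (l - i * b))]
  exact Equiv.sum_comp ((Equiv.mulRight₀ b hb).trans (Equiv.subLeft l)) a

theorem card_support_elt (hb : b ≠ 0) : (elt p a b).support.card = p ^ 2 := by
  rw [Finset.eq_univ_of_forall fun x => Equiv.Perm.mem_support.2 (elt_apply_ne_self a b hb x),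
    Finset.card_univ, Fintype.card_prod, ZMod.card, sq]

theorem elt_pow_prime_eq_one_iff (hb : b ≠ 0) : elt p a b ^ p = 1 ↔ ∑ i, a i = 0 := by
  rw [elt_pow_prime a hb, elt_eq_one_iff, funext_iff]
  simp

theorem elt_pow_prime_sq (hb : b ≠ 0) : elt p a b ^ p ^ 2 = 1 := by
  rw [sq, pow_mul, elt_pow_prime a hb, elt_pow, elt_eq_one_iff]
  simp [nsmul_eq_mul, Pi.zero_def]

theorem cycleType_elt_of_sum_eq_zero (hb : b ≠ 0) (hs : ∑ i, a i = 0) :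
    (elt p a b).cycleType = Multiset.replicate p p := by
  rw [Equiv.Perm.cycleType_eq_replicate_of_pow_prime_eq_one ((elt_pow_prime_eq_one_iff a hb).2 hs),
    card_support_elt a hb, sq, Nat.mul_div_cancel _ (Fact.out : p.Prime).pos]

theorem cycleType_elt_of_sum_ne_zero (hb : b ≠ 0) (hs : ∑ i, a i ≠ 0) :
    (elt p a b).cycleType = {p ^ 2} := by
  have hp : p.Prime := Fact.out
  have horder : orderOf (elt p a b) = p ^ 2 :=
    orderOf_eq_prime_pow (n := 1) (by rwa [pow_one, elt_pow_prime_eq_one_iff a hb])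
      (elt_pow_prime_sq a hb)
  exact Equiv.Perm.cycleType_eq_singleton_of_mem
    (Equiv.Perm.prime_pow_mem_cycleType hp horder) (card_support_elt a hb).le

end

/-- for `x = σ^a τ^b ∈ S − K` (i.e. `b ≠ 0`), `x` is a product of `p`
disjoint `p`-cycles iff `λ(x) = a₀ + ⋯ + a_{p−1} ≡ 0 (mod p)`; otherwise `x` is a
`p²`-cycle. -/
theorem stmt3 (p : ℕ) [Fact p.Prime] (a : ZMod p → ZMod p) (b : ZMod p) (hb : b ≠ 0) :
    ((elt p a b).cycleType = Multiset.replicate p p ↔ ∑ i : ZMod p, a i = 0) ∧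
      ((∑ i : ZMod p, a i) ≠ 0 → (elt p a b).cycleType = {p ^ 2}) := by
  refine ⟨⟨fun h => ?_, cycleType_elt_of_sum_eq_zero a hb⟩, cycleType_elt_of_sum_ne_zero a hb⟩
  by_contra hs
  have hcard := congrArg Multiset.card (h.symm.trans (cycleType_elt_of_sum_ne_zero a hb hs))
  rw [Multiset.card_replicate, Multiset.card_singleton] at hcard
  exact (Fact.out : p.Prime).ne_one hcard
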